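/- For every natural number d, C(d,10) = (1814400/1814400)·L_d(2) − (1109472/1209600)·L_d(3) + (724550/907200)·L_d(4) − (269324/725760)·L_d(5) + (63273/604800)·L_d(6) − (9450/518400)·L_d(7) + (870/453600)·L_d(8) − (45/403200)·L_d(9) + (1/362880)·L_d(10) as rational numbers (the denominators being 10·9·8·7·6·5·4·3 = 1814400, 10·9·8·7·6·5·4·2! = 1209600, 10·9·8·7·6·5·3! = 907200, 10·9·8·7·6·4! = 725760, 10·9·8·7·5! = 604800, 10·9·8·6! = 518400, 10·9·7! = 453600, 10·8! = 403200, 9! = 362880), where L_d(w) = (1/w)·Σ_{r ∣ w} μ(r)·d^{w/r} is the Witt number. -/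

import Mathlib

/-!
Both sides are polynomials in `d`: `C(d, 10) = d (d - 1) ⋯ (d - 9) / 10!`, and every weight
`2 ≤ w ≤ 10` is a prime power or a product of two distinct primes, for which the Möbius sum defining
`L_d(w)` has at most four nonzero terms. After substituting these closed forms the identity is
one of polynomials in `d`.
-/

/-- The Witt number `L_d(w) = (1/w) * Σ_{r ∣ w} μ(r) * d^(w/r)`, as a rational number. -/
def witt (d w : ℕ) : ℚ :=
  (1 / w : ℚ) * ∑ r ∈ w.divisors, (ArithmeticFunction.moebius r : ℚ) * (d : ℚ) ^ (w / r)

open ArithmeticFunction Finset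
open scoped ArithmeticFunction.Moebius

theorem sum_divisors_mul_of_coprime {M : Type*} [AddCommMonoid M] {m n : ℕ} (hmn : m.Coprime n)
    (f : ℕ → M) :
    ∑ r ∈ (m * n).divisors, f r = ∑ a ∈ m.divisors, ∑ b ∈ n.divisors, f (a * b) := by
  rw [Nat.divisors_mul, Finset.mul_def, sum_image hmn.mul_injOn_divisors, sum_product]

theorem witt_prime_pow_succ {p : ℕ} (hp : p.Prime) (d k : ℕ) :
    witt d (p ^ (k + 1)) = ((d : ℚ) ^ p ^ (k + 1) - (d : ℚ) ^ p ^ k) / p ^ (k + 1) := by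
  have hμ : ∀ i, μ (p ^ (i + 2)) = 0 := fun i => by
    simp [moebius_apply_prime_pow hp (Nat.succ_ne_zero _)]
  rw [witt, Nat.sum_divisors_prime_pow hp, sum_range_succ', sum_range_succ',
    sum_eq_zero fun i _ => by rw [hμ, Int.cast_zero, zero_mul]]
  have hdiv : p ^ (k + 1) / p = p ^ k := by rw [pow_succ, Nat.mul_div_cancel _ hp.pos]
  simp only [zero_add, pow_zero, pow_one, Nat.div_one, hdiv, moebius_apply_one,
    moebius_apply_prime hp]
  push_cast
  ring

theorem witt_prime {p : ℕ} (hp : p.Prime) (d : ℕ) :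
    witt d p = ((d : ℚ) ^ p - d) / p := by
  simpa using witt_prime_pow_succ hp d 0

theorem witt_mul_of_prime {p q : ℕ} (hp : p.Prime) (hq : q.Prime) (hpq : p ≠ q) (d : ℕ) :
    witt d (p * q) = ((d : ℚ) ^ (p * q) - d ^ q - d ^ p + d) / (p * q) := by
  have hcop : p.Coprime q := (Nat.coprime_primes hp hq).2 hpq
  rw [witt, sum_divisors_mul_of_coprime hcop, hp.divisors, hq.divisors, sum_pair hp.one_lt.ne,
    sum_pair hq.one_lt.ne, sum_pair hq.one_lt.ne, isMultiplicative_moebius.map_mul_of_coprime hcop]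
  simp [moebius_apply_prime hp, moebius_apply_prime hq, hp.pos, hq.pos]
  ring

theorem cast_choose_ten (d : ℕ) :
    (d.choose 10 : ℚ) =
      d * (d - 1) * (d - 2) * (d - 3) * (d - 4) * (d - 5) * (d - 6) * (d - 7) * (d - 8) * (d - 9)
        / 3628800 := by
  rw [Nat.cast_choose_eq_descPochhammer_div]
  simp [descPochhammer_succ_eval, Nat.factorial]

/-- C(d,10) = (1814400/1814400)·L_d(2) − (1109472/1209600)·L_d(3) + (724550/907200)·L_d(4)
− (269324/725760)·L_d(5) + (63273/604800)·L_d(6) − (9450/518400)·L_d(7) + (870/453600)·L_d(8)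
− (45/403200)·L_d(9) + (1/362880)·L_d(10). -/
theorem choose_ten_eq (d : ℕ) :
    (d.choose 10 : ℚ) =
      (1814400 / 1814400) * witt d 2 - (1109472 / 1209600) * witt d 3
        + (724550 / 907200) * witt d 4 - (269324 / 725760) * witt d 5
        + (63273 / 604800) * witt d 6 - (9450 / 518400) * witt d 7
        + (870 / 453600) * witt d 8 - (45 / 403200) * witt d 9
        + (1 / 362880) * witt d 10 := by
  rw [cast_choose_ten, witt_prime Nat.prime_two, witt_prime Nat.prime_three,
    witt_prime Nat.prime_five, witt_prime Nat.prime_seven,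
    show witt d 4 = witt d (2 ^ (1 + 1)) from rfl, witt_prime_pow_succ Nat.prime_two,
    show witt d 8 = witt d (2 ^ (2 + 1)) from rfl, witt_prime_pow_succ Nat.prime_two,
    show witt d 9 = witt d (3 ^ (1 + 1)) from rfl, witt_prime_pow_succ Nat.prime_three,
    show witt d 6 = witt d (2 * 3) from rfl,
    witt_mul_of_prime Nat.prime_two Nat.prime_three (by norm_num),
    show witt d 10 = witt d (2 * 5) from rfl,
    witt_mul_of_prime Nat.prime_two Nat.prime_five (by norm_num)]
  push_cast
  ring
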